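/- Let a, b, c, d > 0 with b + c ≤ 2√(ad) and max{a,d}/2 - 2√(ad) ≤ b + c, and define G_B : ℝ² → ℝ² by G_B(u) = |u|^{-1}((a u₁² + b u₂²) u₁, (c u₁² + d u₂²) u₂) for u ≠ 0 and G_B(0) = 0. Then G_B is monotone. -/

import Mathlib

set_option maxHeartbeats 1000000

open Classical

/-- `G_B(u) = |u|⁻¹ ((a u₁² + b u₂²) u₁, (c u₁² + d u₂²) u₂)`, with `G_B(0) = 0`. -/
noncomputable def GB2 (a b c d : ℝ) (u : EuclideanSpace ℝ (Fin 2)) :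
    EuclideanSpace ℝ (Fin 2) :=
  if u = 0 then 0 else
    ‖u‖⁻¹ • (WithLp.toLp 2 ![(a * (u 0) ^ 2 + b * (u 1) ^ 2) * u 0,
               (c * (u 0) ^ 2 + d * (u 1) ^ 2) * u 1] : EuclideanSpace ℝ (Fin 2))


/-- coefficient inequality (i): (2b+c-a)² ≤ 24ad + 12ac -/
lemma coeff_i (a b c d t : ℝ) (ha : 0 < a) (hb : 0 < b) (hc : 0 < c) (hd : 0 < d)
    (ht : 0 < t) (ht2 : t ^ 2 = a * d)
    (h1 : b + c ≤ 2 * t) (h2 : a ≤ 2 * (b + c) + 4 * t) :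
    (2 * b + c - a) ^ 2 ≤ 24 * (a * d) + 12 * (a * c) := by
  rcases le_or_gt a (2 * b + c) with hU | hU
  · -- U ≥ 0, U ≤ 2(b+c) ≤ 4t
    nlinarith [sq_nonneg (2 * b + c - a), mul_pos ha hc, sq_nonneg t,
      mul_pos ht (show (0:ℝ) < 4 * t - (2*b+c-a) + (4*t) by nlinarith)]
  · -- U < 0 : a - 2b - c ≤ c + 4t, c < a
    have hca : c < a := by nlinarith
    nlinarith [sq_nonneg (2 * t - 2 * c), mul_pos ht hc, mul_pos ha hc,
      mul_nonneg (le_of_lt hc) (le_of_lt hc),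
      mul_le_mul_of_nonneg_left (le_of_lt hca) (le_of_lt hc)]

lemma coeff_ii (a b c d t : ℝ) (ha : 0 < a) (hb : 0 < b) (hc : 0 < c) (hd : 0 < d)
    (ht : 0 < t) (ht2 : t ^ 2 = a * d)
    (h1 : b + c ≤ 2 * t) (h2a : a ≤ 2 * (b + c) + 4 * t) (h2d : d ≤ 2 * (b + c) + 4 * t) :
    (2 * b + c - a) * (b + 2 * c - d) ≤ 24 * (a * d) + b * c := by
  rcases le_or_gt (2 * b + c) a with hU | hU
  · rcases le_or_gt (b + 2 * c) d with hV | hV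
    · -- both negative: (a-2b-c)(d-b-2c) ≤ (4t+c)(4t+b)
      have hu : a - (2*b+c) ≤ c + 4 * t := by nlinarith
      have hv : d - (b+2*c) ≤ b + 4 * t := by nlinarith
      nlinarith [mul_le_mul hu hv (by nlinarith) (by nlinarith), mul_pos hb hc,
        mul_pos ht hb, mul_pos ht hc, sq_nonneg t]
    · -- U ≤ 0 ≤ V : product ≤ 0
      nlinarith [mul_pos ha hd, mul_pos hb hc, mul_nonneg (show (0:ℝ) ≤ a - (2*b+c) by linarith) (show (0:ℝ) ≤ (b+2*c) - d by linarith)]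
  · rcases le_or_gt (b + 2 * c) d with hV | hV
    · nlinarith [mul_pos ha hd, mul_pos hb hc, mul_nonneg (show (0:ℝ) ≤ (2*b+c) - a by linarith) (show (0:ℝ) ≤ d - (b+2*c) by linarith)]
    · -- both positive: U ≤ 4t, V ≤ 4t
      have hu : 2*b+c-a ≤ 4 * t := by nlinarith
      have hv : b+2*c-d ≤ 4 * t := by nlinarith
      nlinarith [mul_le_mul hu hv (by linarith) (by positivity), mul_pos hb hc, sq_nonneg t]

/-- the discriminant inequality S12² ≤ S11 S22 -/
lemma disc (a b c d t : ℝ) (ha : 0 < a) (hb : 0 < b) (hc : 0 < c) (hd : 0 < d)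
    (ht : 0 < t) (ht2 : t ^ 2 = a * d)
    (h1 : b + c ≤ 2 * t) (h2a : a ≤ 2 * (b + c) + 4 * t) (h2d : d ≤ 2 * (b + c) + 4 * t)
    (x y : ℝ) :
    (x * y * ((2*b+c-a) * x^2 + (b+2*c-d) * y^2) / 2) ^ 2 ≤
      (2*a*x^4 + 3*a*x^2*y^2 + b*y^4) * (c*x^4 + 3*d*x^2*y^2 + 2*d*y^4) := by
  have hi := coeff_i a b c d t ha hb hc hd ht ht2 h1 h2a
  have hiii := coeff_i d c b a t hd hc hb ha ht (by linarith [ht2, mul_comm a d])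
      (by linarith) (by linarith)
  have hii := coeff_ii a b c d t ha hb hc hd ht ht2 h1 h2a h2d
  have hm : (0:ℝ) ≤ x^2 := sq_nonneg x
  have hn : (0:ℝ) ≤ y^2 := sq_nonneg y
  have key : (2*a*x^4 + 3*a*x^2*y^2 + b*y^4) * (c*x^4 + 3*d*x^2*y^2 + 2*d*y^4) * 4
      - (x * y * ((2*b+c-a) * x^2 + (b+2*c-d) * y^2) / 2) ^ 2 * 4
      = 8*a*c*(x^2)^4
        + (24*(a*d)+12*(a*c) - (2*b+c-a)^2) * ((x^2)^3*(y^2))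
        + (52*(a*d)+4*(b*c) - 2*((2*b+c-a)*(b+2*c-d))) * ((x^2)^2*(y^2)^2)
        + (24*(d*a)+12*(d*b) - (2*c+b-d)^2) * ((x^2)*(y^2)^3)
        + 8*b*d*(y^2)^4 := by ring
  have t1 : (0:ℝ) ≤ 8*a*c*(x^2)^4 := by positivity
  have t5 : (0:ℝ) ≤ 8*b*d*(y^2)^4 := by positivity
  have t2 : (0:ℝ) ≤ (24*(a*d)+12*(a*c) - (2*b+c-a)^2) * ((x^2)^3*(y^2)) :=
    mul_nonneg (by linarith) (by positivity)
  have t3 : (0:ℝ) ≤ (52*(a*d)+4*(b*c) - 2*((2*b+c-a)*(b+2*c-d))) * ((x^2)^2*(y^2)^2) :=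
    mul_nonneg (by nlinarith [mul_pos ha hd, mul_pos hb hc]) (by positivity)
  have t4 : (0:ℝ) ≤ (24*(d*a)+12*(d*b) - (2*c+b-d)^2) * ((x^2)*(y^2)^3) :=
    mul_nonneg (by linarith) (by positivity)
  have hpos : 0 ≤ (2*a*x^4 + 3*a*x^2*y^2 + b*y^4) * (c*x^4 + 3*d*x^2*y^2 + 2*d*y^4) * 4
      - (x * y * ((2*b+c-a) * x^2 + (b+2*c-d) * y^2) / 2) ^ 2 * 4 := by
    rw [key]; linarith [t1, t2, t3, t4, t5]
  linarith [hpos]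

/-- the pointwise key inequality K ≥ 0 -/
lemma key_quad (a b c d t : ℝ) (ha : 0 < a) (hb : 0 < b) (hc : 0 < c) (hd : 0 < d)
    (ht : 0 < t) (ht2 : t ^ 2 = a * d)
    (h1 : b + c ≤ 2 * t) (h2a : a ≤ 2 * (b + c) + 4 * t) (h2d : d ≤ 2 * (b + c) + 4 * t)
    (x y H K : ℝ) :
    0 ≤ (x^2 + y^2) * ((3*a*x^2 + b*y^2) * H^2 + 2*(b+c)*x*y*H*K + (c*x^2 + 3*d*y^2) * K^2)
        - ((a*x^2 + b*y^2)*x*H + (c*x^2 + d*y^2)*y*K) * (x*H + y*K) := by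
  set S11 : ℝ := 2*a*x^4 + 3*a*x^2*y^2 + b*y^4 with hS11
  set S22 : ℝ := c*x^4 + 3*d*x^2*y^2 + 2*d*y^4 with hS22
  set S12 : ℝ := x * y * ((2*b+c-a) * x^2 + (b+2*c-d) * y^2) / 2 with hS12
  have hid : (x^2 + y^2) * ((3*a*x^2 + b*y^2) * H^2 + 2*(b+c)*x*y*H*K + (c*x^2 + 3*d*y^2) * K^2)
        - ((a*x^2 + b*y^2)*x*H + (c*x^2 + d*y^2)*y*K) * (x*H + y*K)
      = S11 * H^2 + 2 * S12 * (H*K) + S22 * K^2 := by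
    rw [hS11, hS22, hS12]; ring
  rw [hid]
  have h11 : 0 ≤ S11 := by rw [hS11]; positivity
  have h22 : 0 ≤ S22 := by rw [hS22]; positivity
  have hdisc : S12 ^ 2 ≤ S11 * S22 := disc a b c d t ha hb hc hd ht ht2 h1 h2a h2d x y
  rcases eq_or_lt_of_le h11 with h0 | hpos
  · have : S12 = 0 := by nlinarith [sq_nonneg S12]
    rw [this, ← h0]; nlinarith [sq_nonneg K, h22]
  · have expand : S11 * (S11 * H^2 + 2 * S12 * (H*K) + S22 * K^2)
        = (S11*H + S12*K)^2 + (S11*S22 - S12^2) * K^2 := by ring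
    have hE : 0 ≤ S11 * (S11 * H^2 + 2 * S12 * (H*K) + S22 * K^2) := by
      rw [expand]
      exact add_nonneg (sq_nonneg _) (mul_nonneg (by linarith) (sq_nonneg K))
    nlinarith [hE, hpos]

lemma seg_mono (a b c d t : ℝ) (ha : 0 < a) (hb : 0 < b) (hc : 0 < c) (hd : 0 < d)
    (ht : 0 < t) (ht2 : t ^ 2 = a * d)
    (h1 : b + c ≤ 2 * t) (h2a : a ≤ 2 * (b + c) + 4 * t) (h2d : d ≤ 2 * (b + c) + 4 * t)
    (p q h k : ℝ)
    (hnz : ∀ s ∈ Set.Icc (0:ℝ) 1, (p + s*h)^2 + (q + s*k)^2 ≠ 0) :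
    ((a*p^2 + b*q^2)*(p*h) + (c*p^2 + d*q^2)*(q*k)) / Real.sqrt (p^2 + q^2)
      ≤ ((a*(p+h)^2 + b*(q+k)^2)*((p+h)*h) + (c*(p+h)^2 + d*(q+k)^2)*((q+k)*k))
          / Real.sqrt ((p+h)^2 + (q+k)^2) := by
  set φ : ℝ → ℝ := fun s =>
    ((a*(p+s*h)^2 + b*(q+s*k)^2)*((p+s*h)*h) + (c*(p+s*h)^2 + d*(q+s*k)^2)*((q+s*k)*k))
      / Real.sqrt ((p+s*h)^2 + (q+s*k)^2) with hφ
  have main : ∀ s ∈ Set.Icc (0:ℝ) 1, ∃ D, HasDerivAt φ D s ∧ 0 ≤ D := by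
    intro s hs
    set x := p + s*h with hx
    set y := q + s*k with hy
    have hρ : (0:ℝ) < x^2 + y^2 :=
      lt_of_le_of_ne (by positivity) (Ne.symm (hnz s hs))
    set r := Real.sqrt (x^2 + y^2) with hrdef
    have hr : 0 < r := Real.sqrt_pos.mpr hρ
    have hr2 : r^2 = x^2 + y^2 := Real.sq_sqrt hρ.le
    -- derivatives of coordinates
    have hX : HasDerivAt (fun s : ℝ => p + s*h) h s := by
      simpa using ((hasDerivAt_id s).mul_const h).const_add p
    have hY : HasDerivAt (fun s : ℝ => q + s*k) k s := by
      simpa using ((hasDerivAt_id s).mul_const k).const_add q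
    -- numerator
    have hNum : HasDerivAt
        (fun s : ℝ => (a*(p+s*h)^2 + b*(q+s*k)^2)*((p+s*h)*h)
            + (c*(p+s*h)^2 + d*(q+s*k)^2)*((q+s*k)*k))
        ((3*a*x^2 + b*y^2)*h^2 + 2*(b+c)*x*y*h*k + (c*x^2 + 3*d*y^2)*k^2) s := by
      have hA : HasDerivAt (fun s : ℝ => a*(p+s*h)^2 + b*(q+s*k)^2)
          (a*(2*x^(2-1)*h) + b*(2*y^(2-1)*k)) s := by
        exact (((hX.pow 2).const_mul a).add ((hY.pow 2).const_mul b))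
      have hB : HasDerivAt (fun s : ℝ => c*(p+s*h)^2 + d*(q+s*k)^2)
          (c*(2*x^(2-1)*h) + d*(2*y^(2-1)*k)) s := by
        exact (((hX.pow 2).const_mul c).add ((hY.pow 2).const_mul d))
      have h1' := hA.mul (hX.mul_const h)
      have h2' := hB.mul (hY.mul_const k)
      refine (h1'.add h2').congr_deriv ?_
      simp only [← hx, ← hy]
      ring
    -- denominator
    have hρd : HasDerivAt (fun s : ℝ => (p+s*h)^2 + (q+s*k)^2) (2*x*h + 2*y*k) s := by
      refine ((hX.pow 2).add (hY.pow 2)).congr_deriv ?_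
      simp only [← hx, ← hy]
      ring
    have hDen : HasDerivAt (fun s : ℝ => Real.sqrt ((p+s*h)^2 + (q+s*k)^2))
        ((2*x*h + 2*y*k) / (2 * r)) s := by
      have := hρd.sqrt (hnz s hs)
      simpa [← hx, ← hy, hrdef] using this
    have hφ' : HasDerivAt φ
        ((((3*a*x^2 + b*y^2)*h^2 + 2*(b+c)*x*y*h*k + (c*x^2 + 3*d*y^2)*k^2) * r
          - ((a*x^2 + b*y^2)*(x*h) + (c*x^2 + d*y^2)*(y*k)) * ((2*x*h + 2*y*k) / (2 * r)))
          / r ^ 2) s := by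
      have := hNum.div hDen (ne_of_gt hr)
      exact this
    refine ⟨_, hφ', ?_⟩
    -- positivity of the derivative
    have hK := key_quad a b c d t ha hb hc hd ht ht2 h1 h2a h2d x y h k
    apply div_nonneg _ (sq_nonneg r)
    rw [sub_nonneg, ← mul_div_assoc, div_le_iff₀ (by linarith : (0:ℝ) < 2*r)]
    have e : ((3*a*x^2 + b*y^2)*h^2 + 2*(b+c)*x*y*h*k + (c*x^2 + 3*d*y^2)*k^2) * r * (2*r)
        = 2 * (((3*a*x^2 + b*y^2)*h^2 + 2*(b+c)*x*y*h*k + (c*x^2 + 3*d*y^2)*k^2) * (x^2+y^2)) := by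
      rw [show ((3*a*x^2 + b*y^2)*h^2 + 2*(b+c)*x*y*h*k + (c*x^2 + 3*d*y^2)*k^2) * r * (2*r)
          = 2 * (((3*a*x^2 + b*y^2)*h^2 + 2*(b+c)*x*y*h*k + (c*x^2 + 3*d*y^2)*k^2) * r^2) by ring,
        hr2]
    rw [e]
    nlinarith [hK]
  have hmono : MonotoneOn φ (Set.Icc (0:ℝ) 1) := by
    apply monotoneOn_of_deriv_nonneg (convex_Icc 0 1)
    · intro s hs
      exact ((main s hs).choose_spec.1.continuousAt).continuousWithinAt
    · intro s hs
      rw [interior_Icc] at hs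
      exact ((main s (Set.mem_Icc_of_Ioo hs)).choose_spec.1.differentiableAt).differentiableWithinAt
    · intro s hs
      rw [interior_Icc] at hs
      obtain ⟨D, hD, hD0⟩ := main s (Set.mem_Icc_of_Ioo hs)
      rw [hD.deriv]; exact hD0
  have h01 := hmono (Set.left_mem_Icc.mpr zero_le_one) (Set.right_mem_Icc.mpr zero_le_one)
      zero_le_one
  simpa [hφ] using h01

theorem GB2_monotone_of_sqrt_condition (a b c d : ℝ)
    (ha : 0 < a) (hb : 0 < b) (hc : 0 < c) (hd : 0 < d)
    (h1 : b + c ≤ 2 * Real.sqrt (a * d))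
    (h2 : max a d / 2 - 2 * Real.sqrt (a * d) ≤ b + c) :
    ∀ u v : EuclideanSpace ℝ (Fin 2),
      0 ≤ @inner ℝ _ _ (GB2 a b c d u - GB2 a b c d v) (u - v) := by
  have ht : 0 < Real.sqrt (a * d) := Real.sqrt_pos.mpr (mul_pos ha hd)
  have ht2 : Real.sqrt (a * d) ^ 2 = a * d := Real.sq_sqrt (mul_pos ha hd).le
  have h2a : a ≤ 2 * (b + c) + 4 * Real.sqrt (a * d) := by
    have := le_max_left a d; linarith
  have h2d : d ≤ 2 * (b + c) + 4 * Real.sqrt (a * d) := by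
    have := le_max_right a d; linarith
  -- helpers
  have hzero : ∀ w : EuclideanSpace ℝ (Fin 2), w 0 = 0 → w 1 = 0 → w = 0 := by
    intro w h0 h1
    ext i
    fin_cases i <;> simpa
  have hnormw : ∀ w : EuclideanSpace ℝ (Fin 2),
      ‖w‖ = Real.sqrt ((w 0)^2 + (w 1)^2) := by
    intro w
    rw [EuclideanSpace.norm_eq]
    simp [Fin.sum_univ_two, Real.norm_eq_abs, sq_abs]
  have hinner : ∀ w z : EuclideanSpace ℝ (Fin 2),
      @inner ℝ _ _ w z = w 0 * z 0 + w 1 * z 1 := by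
    intro w z
    simp [PiLp.inner_apply, Fin.sum_univ_two, RCLike.inner_apply, conj_trivial]
    ring
  have hGB0 : ∀ w : EuclideanSpace ℝ (Fin 2), w ≠ 0 →
      GB2 a b c d w 0 = (Real.sqrt ((w 0)^2 + (w 1)^2))⁻¹ * ((a * (w 0)^2 + b * (w 1)^2) * w 0) := by
    intro w hw
    rw [GB2, if_neg hw]
    simp [hnormw w]
  have hGB1 : ∀ w : EuclideanSpace ℝ (Fin 2), w ≠ 0 →
      GB2 a b c d w 1 = (Real.sqrt ((w 0)^2 + (w 1)^2))⁻¹ * ((c * (w 0)^2 + d * (w 1)^2) * w 1) := by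
    intro w hw
    rw [GB2, if_neg hw]
    simp [hnormw w]
  have hpos2 : ∀ w : EuclideanSpace ℝ (Fin 2), w ≠ 0 → 0 < (w 0)^2 + (w 1)^2 := by
    intro w hw
    by_contra hle
    push_neg at hle
    have h0 : w 0 = 0 := by nlinarith [sq_nonneg (w 0), sq_nonneg (w 1)]
    have h1 : w 1 = 0 := by nlinarith [sq_nonneg (w 0), sq_nonneg (w 1)]
    exact hw (hzero w h0 h1)
  intro u v
  rw [show @inner ℝ _ _ (GB2 a b c d u - GB2 a b c d v) (u - v)
      = (GB2 a b c d u 0 - GB2 a b c d v 0) * (u 0 - v 0)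
        + (GB2 a b c d u 1 - GB2 a b c d v 1) * (u 1 - v 1) by
    rw [hinner]; simp]
  by_cases huv : u = v
  · simp [huv]
  by_cases hu : u = 0
  · -- u = 0
    have hv : v ≠ 0 := fun hv => huv (hv ▸ hu)
    rw [hu]
    rw [GB2, if_pos rfl]
    rw [hGB0 v hv, hGB1 v hv]
    have hvp := hpos2 v hv
    have hs : 0 < Real.sqrt ((v 0)^2 + (v 1)^2) := Real.sqrt_pos.mpr hvp
    have key : ((0:EuclideanSpace ℝ (Fin 2)) 0 - (Real.sqrt ((v 0)^2 + (v 1)^2))⁻¹ * ((a * (v 0)^2 + b * (v 1)^2) * v 0)) * ((0:EuclideanSpace ℝ (Fin 2)) 0 - v 0)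
        + ((0:EuclideanSpace ℝ (Fin 2)) 1 - (Real.sqrt ((v 0)^2 + (v 1)^2))⁻¹ * ((c * (v 0)^2 + d * (v 1)^2) * v 1)) * ((0:EuclideanSpace ℝ (Fin 2)) 1 - v 1)
        = (Real.sqrt ((v 0)^2 + (v 1)^2))⁻¹ *
          ((a * (v 0)^2 + b * (v 1)^2) * (v 0)^2 + (c * (v 0)^2 + d * (v 1)^2) * (v 1)^2) := by
      simp; ring
    rw [key]
    positivity
  by_cases hv : v = 0
  · rw [hv]
    rw [show GB2 a b c d 0 = 0 by rw [GB2, if_pos rfl]]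
    rw [hGB0 u hu, hGB1 u hu]
    have hup := hpos2 u hu
    have hs : 0 < Real.sqrt ((u 0)^2 + (u 1)^2) := Real.sqrt_pos.mpr hup
    have key : ((Real.sqrt ((u 0)^2 + (u 1)^2))⁻¹ * ((a * (u 0)^2 + b * (u 1)^2) * u 0) - (0:EuclideanSpace ℝ (Fin 2)) 0) * (u 0 - (0:EuclideanSpace ℝ (Fin 2)) 0)
        + ((Real.sqrt ((u 0)^2 + (u 1)^2))⁻¹ * ((c * (u 0)^2 + d * (u 1)^2) * u 1) - (0:EuclideanSpace ℝ (Fin 2)) 1) * (u 1 - (0:EuclideanSpace ℝ (Fin 2)) 1)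
        = (Real.sqrt ((u 0)^2 + (u 1)^2))⁻¹ *
          ((a * (u 0)^2 + b * (u 1)^2) * (u 0)^2 + (c * (u 0)^2 + d * (u 1)^2) * (u 1)^2) := by
      simp; ring
    rw [key]
    positivity
  · -- both nonzero
    rw [hGB0 u hu, hGB1 u hu, hGB0 v hv, hGB1 v hv]
    have hup := hpos2 u hu
    have hvp := hpos2 v hv
    have hsu : 0 < Real.sqrt ((u 0)^2 + (u 1)^2) := Real.sqrt_pos.mpr hup
    have hsv : 0 < Real.sqrt ((v 0)^2 + (v 1)^2) := Real.sqrt_pos.mpr hvp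
    by_cases hseg : ∃ s : ℝ, 0 ≤ s ∧ s ≤ 1 ∧ v 0 + s * (u 0 - v 0) = 0 ∧ v 1 + s * (u 1 - v 1) = 0
    · -- segment through origin: v = -μ u
      obtain ⟨s, hs0, hs1, he0, he1⟩ := hseg
      have hsne0 : s ≠ 0 := by
        rintro rfl
        simp at he0 he1
        exact hv (hzero v he0 he1)
      have hsne1 : s ≠ 1 := by
        rintro rfl
        have h0 : u 0 = 0 := by linarith [he0]
        have h1 : u 1 = 0 := by linarith [he1]
        exact hu (hzero u h0 h1)
      have hspos : 0 < s := lt_of_le_of_ne hs0 (Ne.symm hsne0)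
      have h1s : 0 < 1 - s := lt_of_le_of_ne (by linarith) (fun h => hsne1 (by linarith))
      set μ := s / (1 - s) with hμdef
      have hμ : 0 < μ := div_pos hspos h1s
      have hv0 : v 0 = -μ * u 0 := by
        rw [hμdef]
        field_simp
        linear_combination (1) * he0
      have hv1 : v 1 = -μ * u 1 := by
        rw [hμdef]
        field_simp
        linear_combination (1) * he1
      have hRv : Real.sqrt ((v 0)^2 + (v 1)^2) = μ * Real.sqrt ((u 0)^2 + (u 1)^2) := by
        rw [hv0, hv1, show (-μ * u 0)^2 + (-μ * u 1)^2 = μ^2 * ((u 0)^2 + (u 1)^2) by ring,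
          Real.sqrt_mul (sq_nonneg μ), Real.sqrt_sq hμ.le]
      rw [hRv, hv0, hv1]
      have key : ((Real.sqrt ((u 0)^2 + (u 1)^2))⁻¹ * ((a * (u 0)^2 + b * (u 1)^2) * u 0)
            - (μ * Real.sqrt ((u 0)^2 + (u 1)^2))⁻¹ * ((a * (-μ * u 0)^2 + b * (-μ * u 1)^2) * (-μ * u 0))) * (u 0 - (-μ * u 0))
          + ((Real.sqrt ((u 0)^2 + (u 1)^2))⁻¹ * ((c * (u 0)^2 + d * (u 1)^2) * u 1)
            - (μ * Real.sqrt ((u 0)^2 + (u 1)^2))⁻¹ * ((c * (-μ * u 0)^2 + d * (-μ * u 1)^2) * (-μ * u 1))) * (u 1 - (-μ * u 1))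
          = (1 + μ^2) * (1 + μ) *
            ((a * (u 0)^2 + b * (u 1)^2) * (u 0)^2 + (c * (u 0)^2 + d * (u 1)^2) * (u 1)^2)
            / Real.sqrt ((u 0)^2 + (u 1)^2) := by
        field_simp
        ring
      rw [key]
      positivity
    · -- segment avoids origin: use seg_mono
      push_neg at hseg
      have hnz : ∀ s ∈ Set.Icc (0:ℝ) 1,
          (v 0 + s * (u 0 - v 0))^2 + (v 1 + s * (u 1 - v 1))^2 ≠ 0 := by
        intro s hs hzero'
        have h0 : v 0 + s * (u 0 - v 0) = 0 := by
          nlinarith [sq_nonneg (v 0 + s * (u 0 - v 0)), sq_nonneg (v 1 + s * (u 1 - v 1))]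
        have h1 : v 1 + s * (u 1 - v 1) = 0 := by
          nlinarith [sq_nonneg (v 0 + s * (u 0 - v 0)), sq_nonneg (v 1 + s * (u 1 - v 1))]
        exact hseg s hs.1 hs.2 h0 h1
      have hm := seg_mono a b c d (Real.sqrt (a*d)) ha hb hc hd ht ht2 h1 h2a h2d
        (v 0) (v 1) (u 0 - v 0) (u 1 - v 1) hnz
      rw [show v 0 + (u 0 - v 0) = u 0 by ring, show v 1 + (u 1 - v 1) = u 1 by ring] at hm
      have expand :
          ((Real.sqrt ((u 0)^2 + (u 1)^2))⁻¹ * ((a * (u 0)^2 + b * (u 1)^2) * u 0)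
            - (Real.sqrt ((v 0)^2 + (v 1)^2))⁻¹ * ((a * (v 0)^2 + b * (v 1)^2) * v 0)) * (u 0 - v 0)
          + ((Real.sqrt ((u 0)^2 + (u 1)^2))⁻¹ * ((c * (u 0)^2 + d * (u 1)^2) * u 1)
            - (Real.sqrt ((v 0)^2 + (v 1)^2))⁻¹ * ((c * (v 0)^2 + d * (v 1)^2) * v 1)) * (u 1 - v 1)
          = ((a*(u 0)^2 + b*(u 1)^2)*((u 0)*(u 0 - v 0)) + (c*(u 0)^2 + d*(u 1)^2)*((u 1)*(u 1 - v 1)))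
              / Real.sqrt ((u 0)^2 + (u 1)^2)
            - ((a*(v 0)^2 + b*(v 1)^2)*((v 0)*(u 0 - v 0)) + (c*(v 0)^2 + d*(v 1)^2)*((v 1)*(u 1 - v 1)))
              / Real.sqrt ((v 0)^2 + (v 1)^2) := by
        field_simp
        ring
      rw [expand]
      linarith [hm]
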